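/- arXiv:2512.03333 — 2 statements merged into one kernel-verified Lean document; each statement's English description precedes it below -/
import Mathlib

section
/- Let A be a real m×r matrix of full column rank r, and let s > 0 be such that ‖A x‖ ≥ s ‖x‖ for all x ∈ ℝ^r (so that the operator norm of the Moore–Penrose pseudoinverse of A is at most 1/s). Let ΔA be an m×r real matrix with ‖ΔA‖ ≤ s/2 (operator norm), and let b, Δb ∈ ℝ^m. Suppose v ∈ ℝ^r satisfies A v = b, and v̂ ∈ ℝ^r is a least-squares solution of the perturbed system, i.e. v̂ minimizes x ↦ ‖(A + ΔA) x − (b + Δb)‖ over ℝ^r. Then ‖v̂ − v‖ ≤ (2/s) (‖ΔA‖ ‖v‖ + ‖Δb‖). -/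
open RealInnerProductSpace


/-- The Euclidean operator norm of a real matrix, i.e. the norm of the induced
linear map between Euclidean spaces. -/
noncomputable def matOpNorm {m r : ℕ} (A : Matrix (Fin m) (Fin r) ℝ) : ℝ :=
  ‖LinearMap.toContinuousLinearMap (Matrix.toEuclideanLin A)‖

lemma orth_of_min {E : Type*} [NormedAddCommGroup E] [InnerProductSpace ℝ E]
    (rh z : E) (h : ∀ t : ℝ, ‖rh‖ ≤ ‖rh + t • z‖) : (inner ℝ rh z : ℝ) = 0 := by
  set c1 := (inner ℝ rh z : ℝ) with hc1
  have key : ∀ t : ℝ, 0 ≤ 2 * (t * c1) + t ^ 2 * ‖z‖ ^ 2 := by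
    intro t
    have h1 := h t
    have h3 : ‖rh‖ ^ 2 ≤ ‖rh + t • z‖ ^ 2 := by
      nlinarith [norm_nonneg rh]
    rw [norm_add_sq_real, real_inner_smul_right, norm_smul, mul_pow] at h3
    simp only [Real.norm_eq_abs] at h3
    nlinarith [sq_abs t]
  have hkey := key (-c1 / (‖z‖ ^ 2 + 1))
  have hz2 : (0:ℝ) ≤ ‖z‖ ^ 2 := sq_nonneg _
  have hpos : (0:ℝ) < ‖z‖ ^ 2 + 1 := by linarith
  have h2 : 2 * (-c1 / (‖z‖ ^ 2 + 1) * c1) + (-c1 / (‖z‖ ^ 2 + 1)) ^ 2 * ‖z‖ ^ 2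
      = -(c1 ^ 2) * (‖z‖ ^ 2 + 2) / (‖z‖ ^ 2 + 1) ^ 2 := by
    field_simp
    ring
  rw [h2] at hkey
  have hden : (0:ℝ) < (‖z‖ ^ 2 + 1) ^ 2 := by positivity
  have h4 : 0 ≤ -c1 ^ 2 * (‖z‖ ^ 2 + 2) := by
    have := (le_div_iff₀ hden).mp hkey
    simpa using this
  nlinarith [sq_nonneg c1]

lemma matOpNorm_bound {m r : ℕ} (A : Matrix (Fin m) (Fin r) ℝ)
    (x : EuclideanSpace ℝ (Fin r)) :
    ‖Matrix.toEuclideanLin A x‖ ≤ matOpNorm A * ‖x‖ := by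
  have := (LinearMap.toContinuousLinearMap (Matrix.toEuclideanLin A)).le_opNorm x
  simpa [matOpNorm] using this

set_option maxHeartbeats 1000000 in
/-- Stability of least-squares solutions under perturbation:
if `A` has full column rank with smallest singular value at least `s > 0`,
`‖ΔA‖ ≤ s/2`, `A v = b`, and `v̂` is a least-squares solution of
`(A + ΔA) x = b + Δb`, then `‖v̂ − v‖ ≤ (2/s) (‖ΔA‖ ‖v‖ + ‖Δb‖)`. -/
theorem least_squares_stability {m r : ℕ}
    (A ΔA : Matrix (Fin m) (Fin r) ℝ) (s : ℝ) (hs : 0 < s)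
    (hA : ∀ x : EuclideanSpace ℝ (Fin r), s * ‖x‖ ≤ ‖Matrix.toEuclideanLin A x‖)
    (hΔA : matOpNorm ΔA ≤ s / 2)
    (b Δb : EuclideanSpace ℝ (Fin m)) (v vhat : EuclideanSpace ℝ (Fin r))
    (hv : Matrix.toEuclideanLin A v = b)
    (hls : ∀ x : EuclideanSpace ℝ (Fin r),
      ‖Matrix.toEuclideanLin (A + ΔA) vhat - (b + Δb)‖ ≤
        ‖Matrix.toEuclideanLin (A + ΔA) x - (b + Δb)‖) :
    ‖vhat - v‖ ≤ (2 / s) * (matOpNorm ΔA * ‖v‖ + ‖Δb‖) := by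
  set L := Matrix.toEuclideanLin A with hL
  set D := Matrix.toEuclideanLin ΔA with hD
  have hB : Matrix.toEuclideanLin (A + ΔA) = L + D := map_add _ _ _
  set c : EuclideanSpace ℝ (Fin m) := b + Δb with hc
  set rh : EuclideanSpace ℝ (Fin m) := (L + D) vhat - c with hrh
  -- orthogonality of the residual
  have horth : ∀ y : EuclideanSpace ℝ (Fin r), (inner ℝ rh ((L + D) y) : ℝ) = 0 := by
    intro y
    apply orth_of_min
    intro t
    have h1 := hls (vhat + t • y)
    rw [hB] at h1
    have h2 : (L + D) (vhat + t • y) - c = rh + t • ((L + D) y) := by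
      simp only [map_add, map_smul, hrh]
      module
    rw [h2] at h1
    exact h1
  -- the "clean" residual d
  set w : EuclideanSpace ℝ (Fin r) := vhat - v with hw
  set d : EuclideanSpace ℝ (Fin m) := D v - Δb with hd
  have hdnorm : ‖d‖ ≤ matOpNorm ΔA * ‖v‖ + ‖Δb‖ := by
    calc ‖d‖ ≤ ‖D v‖ + ‖Δb‖ := norm_sub_le _ _
    _ ≤ matOpNorm ΔA * ‖v‖ + ‖Δb‖ := by
        have := matOpNorm_bound ΔA v
        linarith
  have hBv : (L + D) v - c = d := by
    simp only [hd, hc, LinearMap.add_apply, hv.symm]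
    module
  have hBw : (L + D) w = rh - d := by
    rw [hw, map_sub, hrh, hBv.symm]
    module
  -- ‖(L+D) w‖ ≤ ‖d‖
  have hcs : ‖(L + D) w‖ ≤ ‖d‖ := by
    have h0 : ‖(L + D) w‖ ^ 2 = -(inner ℝ ((L + D) w) d : ℝ) := by
      have h6 : (inner ℝ ((L + D) w) ((L + D) w) : ℝ)
          = (inner ℝ rh ((L + D) w) : ℝ) - (inner ℝ d ((L + D) w) : ℝ) := by
        nth_rewrite 1 [hBw]
        rw [inner_sub_left]
      rw [horth w] at h6
      rw [← real_inner_self_eq_norm_sq, h6, real_inner_comm d ((L + D) w)]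
      ring
    have h1 : -(inner ℝ ((L + D) w) d : ℝ) ≤ ‖(L + D) w‖ * ‖d‖ := by
      have := real_inner_le_norm ((L + D) w) (-d)
      simpa [inner_neg_right] using this
    rcases eq_or_lt_of_le (norm_nonneg ((L + D) w)) with h | h
    · rw [← h]; exact norm_nonneg d
    · have : ‖(L + D) w‖ ^ 2 ≤ ‖(L + D) w‖ * ‖d‖ := by linarith [h0 ▸ h1]
      nlinarith
  -- lower bound
  have hlow : s / 2 * ‖w‖ ≤ ‖(L + D) w‖ := by
    have h1 : ‖L w‖ ≤ ‖(L + D) w‖ + ‖D w‖ := by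
      have : L w = (L + D) w - D w := by simp [LinearMap.add_apply]
      rw [this]
      exact norm_sub_le _ _
    have h2 : ‖D w‖ ≤ s / 2 * ‖w‖ := by
      have := matOpNorm_bound ΔA w
      have h3 : matOpNorm ΔA * ‖w‖ ≤ s / 2 * ‖w‖ :=
        mul_le_mul_of_nonneg_right hΔA (norm_nonneg w)
      linarith
    have := hA w
    linarith
  -- conclude
  have hfinal : s / 2 * ‖w‖ ≤ matOpNorm ΔA * ‖v‖ + ‖Δb‖ := by linarith
  rw [hw] at *
  rw [div_mul_eq_mul_div, le_div_iff₀ hs] at *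
  nlinarith [hfinal]
end

section
/- Let d ≥ 2, let m₁, …, m_d be positive integers, and let r₀ = r_d = 1 and r₁, …, r_{d−1} be positive integers. Let F₁ ∈ ℝ^{m₁×r₁}, F_k ∈ ℝ^{r_{k−1}×m_k×r_k} for 2 ≤ k ≤ d−1, and F_d ∈ ℝ^{r_{d−1}×m_d} be tensor components, and let D : [m₁]×⋯×[m_d] → ℝ be the tensor train they define: D(i₁,…,i_d) = Σ_{α₁,…,α_{d−1}} F₁(i₁,α₁) F₂(α₁,i₂,α₂) ⋯ F_d(α_{d−1},i_d). Let ΔF_k be perturbations with F̂_k = F_k + ΔF_k, and let D̃ be the tensor train built from the components F̂_k in the same way. Assume: (i) m₁ ≥ r₁ and there is a constant c_F > 0 such that the unfolding matrix F₁(i₁; α₁) ∈ ℝ^{m₁×r₁} satisfies ‖F₁ w‖ ≥ (1/c_F)‖w‖ for all w ∈ ℝ^{r₁} (in particular it has full column rank r₁); (ii) for each 2 ≤ k ≤ d−1, m_k ≥ r_{k−1} r_k and the unfolding matrix F_k(i_k; (α_{k−1}, α_k)) ∈ ℝ^{m_k × r_{k−1} r_k} satisfies ‖F_k w‖ ≥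 (1/c_F)‖w‖ for all w ∈ ℝ^{r_{k−1} r_k}; (iii) m_d ≥ r_{d−1} and the unfolding matrix F_d(i_d; α_{d−1}) ∈ ℝ^{m_d × r_{d−1}} satisfies ‖F_d w‖ ≥ (1/c_F)‖w‖ for all w ∈ ℝ^{r_{d−1}}; (iv) there is ε > 0 with ‖F_k − F̂_k‖_F ≤ ε for every 1 ≤ k ≤ d. If moreover ε ≤ 1/(c_F d), then ‖D − D̃‖_F ≤ 2 d c_F ε ‖D‖_F. -/
/-- The Euclidean (Frobenius) norm of a finitely-indexed family of reals. -/
noncomputable def eNorm {ι : Type*} [Fintype ι] (v : ι → ℝ) : ℝ :=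
  Real.sqrt (∑ i, v i ^ 2)

namespace ENormAux

variable {ι κ : Type*} [Fintype ι] [Fintype κ]

theorem sum_sq_nonneg (v : ι → ℝ) : 0 ≤ ∑ i, v i ^ 2 :=
  Finset.sum_nonneg fun i _ => sq_nonneg _

theorem enorm_nonneg (v : ι → ℝ) : 0 ≤ eNorm v := Real.sqrt_nonneg _

theorem enorm_sq (v : ι → ℝ) : eNorm v ^ 2 = ∑ i, v i ^ 2 :=
  Real.sq_sqrt (sum_sq_nonneg v)

theorem enorm_le {v : ι → ℝ} {c : ℝ} (hc : 0 ≤ c) (h : ∑ i, v i ^ 2 ≤ c ^ 2) :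
    eNorm v ≤ c := by
  have := Real.sqrt_le_sqrt h
  rwa [Real.sqrt_sq hc] at this

theorem le_enorm {v : ι → ℝ} {c : ℝ} (hc : 0 ≤ c) (h : c ^ 2 ≤ ∑ i, v i ^ 2) :
    c ≤ eNorm v := by
  have := Real.sqrt_le_sqrt h
  rwa [Real.sqrt_sq hc] at this

theorem inner_le (v w : ι → ℝ) : ∑ i, v i * w i ≤ eNorm v * eNorm w := by
  have h := Finset.sum_mul_sq_le_sq_mul_sq Finset.univ v w
  have h2 := Real.sqrt_le_sqrt h
  rw [Real.sqrt_sq_eq_abs, Real.sqrt_mul (sum_sq_nonneg v)] at h2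
  exact le_trans (le_abs_self _) h2

theorem enorm_add_le (v w : ι → ℝ) :
    eNorm (fun i => v i + w i) ≤ eNorm v + eNorm w := by
  refine enorm_le (add_nonneg (enorm_nonneg v) (enorm_nonneg w)) ?_
  have : ∑ i, (v i + w i) ^ 2 = (∑ i, v i ^ 2) + 2 * (∑ i, v i * w i) + ∑ i, w i ^ 2 := by
    rw [Finset.sum_congr rfl (fun i _ => (by ring : (v i + w i) ^ 2 = v i ^ 2 + (2 * (v i * w i) + w i ^ 2))),
      Finset.sum_add_distrib, Finset.sum_add_distrib, ← Finset.mul_sum]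
    ring
  rw [this, ← enorm_sq v, ← enorm_sq w]
  have := inner_le v w
  nlinarith [enorm_nonneg v, enorm_nonneg w]

theorem enorm_neg (v : ι → ℝ) : eNorm (fun i => - v i) = eNorm v := by
  unfold eNorm; congr 1; exact Finset.sum_congr rfl fun i _ => by ring

theorem enorm_comp_equiv (e : κ ≃ ι) (v : ι → ℝ) : eNorm (fun j => v (e j)) = eNorm v := by
  unfold eNorm; congr 1
  exact Fintype.sum_equiv e _ _ fun j => rfl

theorem enorm_congr {v w : ι → ℝ} (h : ∀ i, v i = w i) : eNorm v = eNorm w := by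
  unfold eNorm; congr 1; exact Finset.sum_congr rfl fun i _ => by rw [h]

theorem enorm_tensor (v : ι → ℝ) (w : κ → ℝ) :
    eNorm (fun p : ι × κ => v p.1 * w p.2) = eNorm v * eNorm w := by
  unfold eNorm
  rw [← Real.sqrt_mul (sum_sq_nonneg v)]
  congr 1
  rw [Fintype.sum_prod_type, Finset.sum_mul]
  exact Finset.sum_congr rfl fun i _ => by
    rw [Finset.mul_sum]; exact Finset.sum_congr rfl fun j _ => by ring

theorem enorm_prod_sq (f : ι × κ → ℝ) :
    eNorm f ^ 2 = ∑ i : ι, eNorm (fun j => f (i, j)) ^ 2 := by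
  rw [enorm_sq, Fintype.sum_prod_type]
  exact Finset.sum_congr rfl fun i _ => (enorm_sq _).symm

theorem enorm_smul (c : ℝ) (v : ι → ℝ) : eNorm (fun i => c * v i) = |c| * eNorm v := by
  unfold eNorm
  rw [← Real.sqrt_sq_eq_abs, ← Real.sqrt_mul (sq_nonneg c)]
  congr 1
  rw [Finset.mul_sum]
  exact Finset.sum_congr rfl fun i _ => by ring

theorem enorm_zero : eNorm (fun _ : ι => (0:ℝ)) = 0 := by
  unfold eNorm; simp

end ENormAux

open ENormAux

theorem enorm_prod_sq' {ι κ : Type*} [Fintype ι] [Fintype κ] (f : ι × κ → ℝ) :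
    eNorm f ^ 2 = ∑ v : κ, eNorm (fun i => f (i, v)) ^ 2 := by
  rw [enorm_sq, Fintype.sum_prod_type_right]
  exact Finset.sum_congr rfl fun v _ => (enorm_sq _).symm

theorem step_lemma {J : Type*} [Fintype J] {R R' m : ℕ}
    (T That : J → Fin R → ℝ) (F Fhat : Fin R → Fin m → Fin R' → ℝ)
    (cF ε lam : ℝ) (hc : 0 < cF) (hε : 0 ≤ ε) (hlam : 0 ≤ lam)
    (hsv : ∀ w : Fin R × Fin R' → ℝ,
      (1 / cF) * eNorm w ≤ eNorm (fun v : Fin m => ∑ p : Fin R × Fin R', F p.1 v p.2 * w p))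
    (hpert : eNorm (fun q : Fin R × Fin m × Fin R' =>
      F q.1 q.2.1 q.2.2 - Fhat q.1 q.2.1 q.2.2) ≤ ε)
    (hind : ∀ w : Fin R → ℝ,
      eNorm (fun j => ∑ a, (That j a - T j a) * w a) ≤ lam * eNorm (fun j => ∑ a, T j a * w a))
    (w' : Fin R' → ℝ) :
      eNorm (fun p : J × Fin m =>
          ∑ b, ((∑ a, That p.1 a * Fhat a p.2 b) - (∑ a, T p.1 a * F a p.2 b)) * w' b)
        ≤ ((1 + lam) * (1 + cF * ε) - 1) *
          eNorm (fun p : J × Fin m => ∑ b, (∑ a, T p.1 a * F a p.2 b) * w' b) := by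
  classical
  -- contracted component slices
  set g : Fin m → Fin R → ℝ := fun v a => ∑ b, F a v b * w' b with hg
  set h : Fin m → Fin R → ℝ := fun v a => ∑ b, (Fhat a v b - F a v b) * w' b with hh
  -- applications of the train operators
  set Tx : (Fin R → ℝ) → J → ℝ := fun x j => ∑ a, T j a * x a with hTx
  set DTx : (Fin R → ℝ) → J → ℝ := fun x j => ∑ a, (That j a - T j a) * x a with hDTx
  set Thx : (Fin R → ℝ) → J → ℝ := fun x j => ∑ a, That j a * x a with hThx
  set S : J × Fin m → ℝ := fun p => Tx (g p.2) p.1 with hS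
  set NS : ℝ := eNorm S with hNS
  have hNSnn : 0 ≤ NS := enorm_nonneg _
  -- rewrite of the RHS function
  have hrhs : ∀ p : J × Fin m, (∑ b, (∑ a, T p.1 a * F a p.2 b) * w' b) = S p := by
    intro p
    simp only [hS, hTx, hg, Finset.sum_mul, Finset.mul_sum]
    rw [Finset.sum_comm]
    exact Finset.sum_congr rfl fun a _ => Finset.sum_congr rfl fun b _ => by ring
  -- rewrite of the LHS function
  have hlhs : ∀ p : J × Fin m,
      (∑ b, ((∑ a, That p.1 a * Fhat a p.2 b) - (∑ a, T p.1 a * F a p.2 b)) * w' b)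
        = DTx (g p.2) p.1 + Thx (h p.2) p.1 := by
    intro p
    simp only [hDTx, hThx, hg, hh, sub_mul, mul_sub, Finset.sum_mul, Finset.mul_sum,
      Finset.sum_sub_distrib]
    rw [Finset.sum_comm (γ := Fin R') (α := Fin R) (s := Finset.univ) (t := Finset.univ)
      (f := fun b a => That p.1 a * Fhat a p.2 b * w' b),
      Finset.sum_comm (γ := Fin R') (α := Fin R) (s := Finset.univ) (t := Finset.univ)
      (f := fun b a => T p.1 a * F a p.2 b * w' b)]
    ring_nf
  -- norm of S as a sum over slices
  have hSsq : NS ^ 2 = ∑ v : Fin m, eNorm (Tx (g v)) ^ 2 := by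
    rw [hNS, enorm_prod_sq' S]
  -- degenerate case
  by_cases hw0 : eNorm w' = 0
  · have hw' : ∀ b, w' b = 0 := by
      intro b
      have h0 : ∑ b, w' b ^ 2 = 0 := by
        have := enorm_sq w'; rw [hw0] at this; simpa using this.symm
      have := (Finset.sum_eq_zero_iff_of_nonneg (fun i _ => sq_nonneg (w' i))).mp h0 b
        (Finset.mem_univ b)
      exact pow_eq_zero_iff (two_ne_zero) |>.mp this
    have hz : ∀ p : J × Fin m,
        (∑ b, ((∑ a, That p.1 a * Fhat a p.2 b) - (∑ a, T p.1 a * F a p.2 b)) * w' b) = 0 := by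
      intro p; apply Finset.sum_eq_zero; intro b _; rw [hw' b]; ring
    rw [enorm_congr hz, ENormAux.enorm_zero]
    have hco : (0:ℝ) ≤ (1 + lam) * (1 + cF * ε) - 1 := by
      nlinarith [hlam, mul_nonneg hc.le hε, mul_nonneg hlam (mul_nonneg hc.le hε)]
    exact mul_nonneg hco (enorm_nonneg _)
  have hw'pos : 0 < eNorm w' := lt_of_le_of_ne (enorm_nonneg w') (Ne.symm hw0)
  -- the key lower bound (B): for every x, ‖Tx x‖ * ‖w'‖ ≤ cF * NS * ‖x‖
  have hB : ∀ x : Fin R → ℝ, eNorm (Tx x) * eNorm w' ≤ cF * NS * eNorm x := by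
    intro x
    by_cases hTx0 : eNorm (Tx x) = 0
    · rw [hTx0, zero_mul]
      exact mul_nonneg (mul_nonneg hc.le hNSnn) (enorm_nonneg x)
    have hTxpos : 0 < eNorm (Tx x) := lt_of_le_of_ne (enorm_nonneg _) (Ne.symm hTx0)
    set q : Fin R → ℝ := fun a => ∑ j, T j a * Tx x j with hq
    -- (i) ⟨x, q⟩ = ‖Tx x‖²
    have hxq : ∑ a, x a * q a = eNorm (Tx x) ^ 2 := by
      rw [enorm_sq]
      simp only [hq, Finset.mul_sum]
      rw [Finset.sum_comm]
      exact Finset.sum_congr rfl fun j _ => by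
        rw [hTx, sq, Finset.sum_mul]
        exact Finset.sum_congr rfl fun a _ => by ring
    -- (ii) ‖Tx x‖² ≤ ‖x‖ ‖q‖
    have hii : eNorm (Tx x) ^ 2 ≤ eNorm x * eNorm q := by
      rw [← hxq]; exact inner_le x q
    -- (iii)+(iv): for each v, ⟨g v, q⟩² ≤ ‖Tx (g v)‖² ‖Tx x‖²
    have hiv : ∀ v : Fin m,
        (∑ a, q a * g v a) ^ 2 ≤ eNorm (Tx (g v)) ^ 2 * eNorm (Tx x) ^ 2 := by
      intro v
      have hswap : ∑ a, q a * g v a = ∑ j, Tx (g v) j * Tx x j := by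
        simp only [hq, Finset.sum_mul, Finset.mul_sum]
        rw [Finset.sum_comm]
        exact Finset.sum_congr rfl fun j _ => by
          rw [hTx, Finset.sum_mul]
          exact Finset.sum_congr rfl fun a _ => by ring
      rw [hswap]
      calc (∑ j, Tx (g v) j * Tx x j) ^ 2
          ≤ (∑ j, Tx (g v) j ^ 2) * ∑ j, Tx x j ^ 2 :=
            Finset.sum_mul_sq_le_sq_mul_sq Finset.univ _ _
        _ = eNorm (Tx (g v)) ^ 2 * eNorm (Tx x) ^ 2 := by rw [enorm_sq, enorm_sq]
    -- (v): Σ_v ⟨g v, q⟩² ≥ (1/cF)² ‖q‖² ‖w'‖²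
    have hv : ((1 / cF) * (eNorm q * eNorm w')) ^ 2 ≤ ∑ v : Fin m, (∑ a, q a * g v a) ^ 2 := by
      have hform : ∀ v : Fin m,
          (∑ a, q a * g v a)
            = ∑ p : Fin R × Fin R', F p.1 v p.2 * (q p.1 * w' p.2) := by
        intro v
        rw [Fintype.sum_prod_type]
        simp only [hg, Finset.mul_sum]
        exact Finset.sum_congr rfl fun a _ => Finset.sum_congr rfl fun b _ => by ring
      have h1 := hsv (fun p : Fin R × Fin R' => q p.1 * w' p.2)
      rw [enorm_tensor q w'] at h1
      have h2 : ((1 / cF) * (eNorm q * eNorm w')) ^ 2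
          ≤ eNorm (fun v : Fin m => ∑ p : Fin R × Fin R', F p.1 v p.2 * (q p.1 * w' p.2)) ^ 2 := by
        exact pow_le_pow_left₀ (mul_nonneg (by positivity)
          (mul_nonneg (enorm_nonneg q) (enorm_nonneg w'))) h1 2
      calc ((1 / cF) * (eNorm q * eNorm w')) ^ 2
          ≤ eNorm (fun v : Fin m => ∑ p : Fin R × Fin R', F p.1 v p.2 * (q p.1 * w' p.2)) ^ 2 := h2
        _ = ∑ v : Fin m, (∑ p : Fin R × Fin R', F p.1 v p.2 * (q p.1 * w' p.2)) ^ 2 := enorm_sq _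
        _ = ∑ v : Fin m, (∑ a, q a * g v a) ^ 2 :=
            Finset.sum_congr rfl fun v _ => by rw [hform v]
    -- combine: (1/cF)²‖q‖²‖w'‖² ≤ NS² ‖Tx x‖²
    have hα : ((1 / cF) * (eNorm q * eNorm w')) ^ 2 ≤ (NS * eNorm (Tx x)) ^ 2 := by
      calc ((1 / cF) * (eNorm q * eNorm w')) ^ 2
          ≤ ∑ v : Fin m, (∑ a, q a * g v a) ^ 2 := hv
        _ ≤ ∑ v : Fin m, eNorm (Tx (g v)) ^ 2 * eNorm (Tx x) ^ 2 :=
            Finset.sum_le_sum fun v _ => hiv v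
        _ = (∑ v : Fin m, eNorm (Tx (g v)) ^ 2) * eNorm (Tx x) ^ 2 := by
            rw [Finset.sum_mul]
        _ = (NS * eNorm (Tx x)) ^ 2 := by rw [← hSsq]; ring
    have hα' : eNorm q * eNorm w' ≤ cF * (NS * eNorm (Tx x)) := by
      have hsq : ((1 / cF) * (eNorm q * eNorm w')) ≤ NS * eNorm (Tx x) := by
        have h1 := Real.sqrt_le_sqrt hα
        rwa [Real.sqrt_sq (mul_nonneg (by positivity)
            (mul_nonneg (enorm_nonneg q) (enorm_nonneg w'))),
          Real.sqrt_sq (mul_nonneg hNSnn (enorm_nonneg _))] at h1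
      calc eNorm q * eNorm w' = cF * ((1 / cF) * (eNorm q * eNorm w')) := by
            field_simp
        _ ≤ cF * (NS * eNorm (Tx x)) := by
            exact mul_le_mul_of_nonneg_left hsq hc.le
    -- finish (B)
    have hfin : eNorm (Tx x) ^ 2 * eNorm w' ≤ cF * NS * eNorm x * eNorm (Tx x) := by
      calc eNorm (Tx x) ^ 2 * eNorm w' ≤ (eNorm x * eNorm q) * eNorm w' :=
            mul_le_mul_of_nonneg_right hii hw'pos.le
        _ = eNorm x * (eNorm q * eNorm w') := by ring
        _ ≤ eNorm x * (cF * (NS * eNorm (Tx x))) :=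
            mul_le_mul_of_nonneg_left hα' (enorm_nonneg x)
        _ = cF * NS * eNorm x * eNorm (Tx x) := by ring
    nlinarith [hfin, hTxpos]
  -- Σ_v ‖h v‖² ≤ ε² ‖w'‖²
  have hhsum : ∑ v : Fin m, eNorm (h v) ^ 2 ≤ ε ^ 2 * eNorm w' ^ 2 := by
    have hper : ∀ (a : Fin R) (v : Fin m),
        h v a ^ 2 ≤ (∑ b, (F a v b - Fhat a v b) ^ 2) * ∑ b, w' b ^ 2 := by
      intro a v
      have : h v a = ∑ b, (Fhat a v b - F a v b) * w' b := rfl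
      rw [this]
      calc (∑ b, (Fhat a v b - F a v b) * w' b) ^ 2
          ≤ (∑ b, (Fhat a v b - F a v b) ^ 2) * ∑ b, w' b ^ 2 :=
            Finset.sum_mul_sq_le_sq_mul_sq Finset.univ _ _
        _ = (∑ b, (F a v b - Fhat a v b) ^ 2) * ∑ b, w' b ^ 2 := by
            congr 1
            exact Finset.sum_congr rfl fun b _ => by ring
    have hΔ : ∑ v : Fin m, ∑ a : Fin R, (∑ b, (F a v b - Fhat a v b) ^ 2) ≤ ε ^ 2 := by
      have h1 : eNorm (fun q : Fin R × Fin m × Fin R' =>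
          F q.1 q.2.1 q.2.2 - Fhat q.1 q.2.1 q.2.2) ^ 2 ≤ ε ^ 2 :=
        pow_le_pow_left₀ (enorm_nonneg _) hpert 2
      rw [enorm_sq] at h1
      calc ∑ v : Fin m, ∑ a : Fin R, (∑ b, (F a v b - Fhat a v b) ^ 2)
          = ∑ q : Fin R × Fin m × Fin R', (F q.1 q.2.1 q.2.2 - Fhat q.1 q.2.1 q.2.2) ^ 2 := by
            rw [Fintype.sum_prod_type]
            rw [Finset.sum_comm]
            exact Finset.sum_congr rfl fun a _ => by
              rw [Fintype.sum_prod_type]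
        _ ≤ ε ^ 2 := h1
    calc ∑ v : Fin m, eNorm (h v) ^ 2
        = ∑ v : Fin m, ∑ a : Fin R, h v a ^ 2 :=
          Finset.sum_congr rfl fun v _ => enorm_sq _
      _ ≤ ∑ v : Fin m, ∑ a : Fin R, (∑ b, (F a v b - Fhat a v b) ^ 2) * ∑ b, w' b ^ 2 :=
          Finset.sum_le_sum fun v _ => Finset.sum_le_sum fun a _ => hper a v
      _ = (∑ v : Fin m, ∑ a : Fin R, (∑ b, (F a v b - Fhat a v b) ^ 2)) * ∑ b, w' b ^ 2 := by
          rw [Finset.sum_mul]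
          exact Finset.sum_congr rfl fun v _ => by rw [Finset.sum_mul]
      _ ≤ ε ^ 2 * ∑ b, w' b ^ 2 := by
          apply mul_le_mul_of_nonneg_right hΔ (sum_sq_nonneg w')
      _ = ε ^ 2 * eNorm w' ^ 2 := by rw [enorm_sq]
  -- term1 bound
  have hterm1 : eNorm (fun p : J × Fin m => DTx (g p.2) p.1) ≤ lam * NS := by
    apply enorm_le (mul_nonneg hlam hNSnn)
    rw [← enorm_sq (fun p : J × Fin m => DTx (g p.2) p.1), enorm_prod_sq']
    calc ∑ v : Fin m, eNorm (fun j => DTx (g v) j) ^ 2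
        ≤ ∑ v : Fin m, (lam * eNorm (fun j => Tx (g v) j)) ^ 2 := by
          apply Finset.sum_le_sum
          intro v _
          exact pow_le_pow_left₀ (enorm_nonneg _) (hind (g v)) 2
      _ = lam ^ 2 * ∑ v : Fin m, eNorm (Tx (g v)) ^ 2 := by
          rw [Finset.mul_sum]
          exact Finset.sum_congr rfl fun v _ => by ring
      _ = (lam * NS) ^ 2 := by rw [← hSsq]; ring
  -- term2 bound
  have hterm2 : eNorm (fun p : J × Fin m => Thx (h p.2) p.1) ≤ (1 + lam) * (cF * ε) * NS := by
    apply enorm_le (mul_nonneg (mul_nonneg (by linarith) (by positivity)) hNSnn)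
    rw [← enorm_sq (fun p : J × Fin m => Thx (h p.2) p.1), enorm_prod_sq']
    -- per v: ‖Thx (h v)‖ ≤ (1+lam) ‖Tx (h v)‖
    have hThv : ∀ v : Fin m, eNorm (fun j => Thx (h v) j) ≤ (1 + lam) * eNorm (Tx (h v)) := by
      intro v
      have hsplit : ∀ j, Thx (h v) j = Tx (h v) j + (∑ a, (That j a - T j a) * h v a) := by
        intro j
        simp only [hThx, hTx]
        rw [← Finset.sum_add_distrib]
        exact Finset.sum_congr rfl fun a _ => by ring
      calc eNorm (fun j => Thx (h v) j)
          = eNorm (fun j => Tx (h v) j + (∑ a, (That j a - T j a) * h v a)) :=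
            enorm_congr hsplit
        _ ≤ eNorm (Tx (h v)) + eNorm (fun j => ∑ a, (That j a - T j a) * h v a) :=
            enorm_add_le _ _
        _ ≤ eNorm (Tx (h v)) + lam * eNorm (fun j => ∑ a, T j a * h v a) := by
            have := hind (h v)
            linarith
        _ = (1 + lam) * eNorm (Tx (h v)) := by rw [hTx]; ring
    -- Σ_v ‖Tx (h v)‖² ≤ cF² NS² ε²
    have hTxh : ∑ v : Fin m, eNorm (Tx (h v)) ^ 2 ≤ cF ^ 2 * NS ^ 2 * ε ^ 2 := by
      have hmul : ∀ v : Fin m,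
          eNorm (Tx (h v)) ^ 2 * eNorm w' ^ 2 ≤ (cF * NS) ^ 2 * eNorm (h v) ^ 2 := by
        intro v
        have h2 := pow_le_pow_left₀ (mul_nonneg (enorm_nonneg (Tx (h v))) (enorm_nonneg w'))
          (hB (h v)) 2
        nlinarith [h2]
      have hs : (∑ v : Fin m, eNorm (Tx (h v)) ^ 2) * eNorm w' ^ 2
          ≤ (cF * NS) ^ 2 * (ε ^ 2 * eNorm w' ^ 2) := by
        calc (∑ v : Fin m, eNorm (Tx (h v)) ^ 2) * eNorm w' ^ 2
            = ∑ v : Fin m, eNorm (Tx (h v)) ^ 2 * eNorm w' ^ 2 := Finset.sum_mul _ _ _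
          _ ≤ ∑ v : Fin m, (cF * NS) ^ 2 * eNorm (h v) ^ 2 :=
              Finset.sum_le_sum fun v _ => hmul v
          _ = (cF * NS) ^ 2 * ∑ v : Fin m, eNorm (h v) ^ 2 := by rw [Finset.mul_sum]
          _ ≤ (cF * NS) ^ 2 * (ε ^ 2 * eNorm w' ^ 2) :=
              mul_le_mul_of_nonneg_left hhsum (by positivity)
      have hw2 : 0 < eNorm w' ^ 2 := by positivity
      have hs' : (∑ v : Fin m, eNorm (Tx (h v)) ^ 2) * eNorm w' ^ 2
          ≤ (cF ^ 2 * NS ^ 2 * ε ^ 2) * eNorm w' ^ 2 := by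
        calc (∑ v : Fin m, eNorm (Tx (h v)) ^ 2) * eNorm w' ^ 2
            ≤ (cF * NS) ^ 2 * (ε ^ 2 * eNorm w' ^ 2) := hs
          _ = (cF ^ 2 * NS ^ 2 * ε ^ 2) * eNorm w' ^ 2 := by ring
      exact le_of_mul_le_mul_right hs' hw2
    calc ∑ v : Fin m, eNorm (fun j => Thx (h v) j) ^ 2
        ≤ ∑ v : Fin m, ((1 + lam) * eNorm (Tx (h v))) ^ 2 :=
          Finset.sum_le_sum fun v _ => pow_le_pow_left₀ (enorm_nonneg _) (hThv v) 2
      _ = (1 + lam) ^ 2 * ∑ v : Fin m, eNorm (Tx (h v)) ^ 2 := by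
          rw [Finset.mul_sum]
          exact Finset.sum_congr rfl fun v _ => by ring
      _ ≤ (1 + lam) ^ 2 * (cF ^ 2 * NS ^ 2 * ε ^ 2) :=
          mul_le_mul_of_nonneg_left hTxh (by positivity)
      _ = ((1 + lam) * (cF * ε) * NS) ^ 2 := by ring
  -- assemble
  calc eNorm (fun p : J × Fin m =>
          ∑ b, ((∑ a, That p.1 a * Fhat a p.2 b) - (∑ a, T p.1 a * F a p.2 b)) * w' b)
      = eNorm (fun p : J × Fin m => DTx (g p.2) p.1 + Thx (h p.2) p.1) := enorm_congr hlhs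
    _ ≤ eNorm (fun p : J × Fin m => DTx (g p.2) p.1)
        + eNorm (fun p : J × Fin m => Thx (h p.2) p.1) := enorm_add_le _ _
    _ ≤ lam * NS + (1 + lam) * (cF * ε) * NS := add_le_add hterm1 hterm2
    _ = ((1 + lam) * (1 + cF * ε) - 1) * NS := by ring
    _ = ((1 + lam) * (1 + cF * ε) - 1) *
          eNorm (fun p : J × Fin m => ∑ b, (∑ a, T p.1 a * F a p.2 b) * w' b) := by
        rw [enorm_congr hrhs]

section Structural

/-- Split a dependent function on `Fin (n+1)` into its initial part and last value. -/
def piSplitLast {n : ℕ} (X : Fin (n + 1) → Type*) :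
    (∀ j, X j) ≃ (∀ j : Fin n, X j.castSucc) × X (Fin.last n) where
  toFun f := (Fin.init f, f (Fin.last n))
  invFun p := Fin.snoc p.1 p.2
  left_inv f := Fin.snoc_init_self f
  right_inv p := by
    obtain ⟨β, b⟩ := p
    refine Prod.ext ?_ ?_
    · funext j
      simp [Fin.init, Fin.snoc_castSucc]
    · simp [Fin.snoc_last]

theorem sum_split_last {n : ℕ} (X : Fin (n + 1) → Type*) [∀ j, Fintype (X j)]
    [∀ j, DecidableEq (X j)] (f : (∀ j, X j) → ℝ) :
    ∑ α : ∀ j, X j, f α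
      = ∑ b : X (Fin.last n), ∑ β : ∀ j : Fin n, X j.castSucc, f (Fin.snoc β b) := by
  have := Fintype.sum_equiv ((piSplitLast X).trans (Equiv.prodComm _ _)) f
    (fun p : X (Fin.last n) × (∀ j : Fin n, X j.castSucc) => f (Fin.snoc p.2 p.1)) (fun α => by
      simp [piSplitLast, Fin.snoc_init_self])
  rw [this, Fintype.sum_prod_type]

variable {d : ℕ} (mdim : Fin d → ℕ) (r : Fin (d + 1) → ℕ)

/-- Total version of the rank function. -/
def rP (k : ℕ) : ℕ := if h : k < d + 1 then r ⟨k, h⟩ else 1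

/-- Total version of the mode dimension function. -/
def mP (k : ℕ) : ℕ := if h : k < d then mdim ⟨k, h⟩ else 1

theorem rP_eq {k : ℕ} (h : k < d + 1) : rP r k = r ⟨k, h⟩ := dif_pos h

theorem rP_eq_castSucc {k : ℕ} (h : k < d) :
    rP r k = r (Fin.castSucc ⟨k, h⟩) := rP_eq r (Nat.lt_succ_of_lt h)

theorem rP_eq_succ {k : ℕ} (h : k < d) :
    rP r (k + 1) = r (Fin.succ ⟨k, h⟩) := rP_eq r (Nat.succ_lt_succ h)

theorem mP_eq {k : ℕ} (h : k < d) : mP mdim k = mdim ⟨k, h⟩ := dif_pos h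

/-- Prefix index tuples. -/
def JP (k : ℕ) := ∀ j : Fin k, Fin (mP mdim j.val)

instance JP.fintype (k : ℕ) : Fintype (JP mdim k) := by unfold JP; infer_instance
instance JP.decEq (k : ℕ) : DecidableEq (JP mdim k) := by unfold JP; infer_instance

/-- Total version of a tensor-train component family. -/
def GP (F : (k : Fin d) → Fin (r k.castSucc) → Fin (mdim k) → Fin (r k.succ) → ℝ) (k : ℕ) :
    Fin (rP r k) → Fin (mP mdim k) → Fin (rP r (k + 1)) → ℝ :=
  if h : k < d then
    fun a v b => F ⟨k, h⟩ (Fin.cast (rP_eq_castSucc r h) a) (Fin.cast (mP_eq mdim h) v)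
      (Fin.cast (rP_eq_succ r h) b)
  else fun _ _ _ => 0

/-- Prefix tensor trains built from a total component family. -/
def PP (C : (k : ℕ) → Fin (rP r k) → Fin (mP mdim k) → Fin (rP r (k + 1)) → ℝ)
    (k : ℕ) (i : JP mdim k) (a : Fin (rP r k)) : ℝ :=
  ∑ α : ∀ j : Fin k, Fin (rP r j.val),
    ∏ j : Fin k,
      C j.val (α j) (i j) (Fin.snoc (α := fun t : Fin (k + 1) => Fin (rP r t.val)) α a j.succ)

theorem PP_zero (C) (i : JP mdim 0) (a : Fin (rP r 0)) : PP mdim r C 0 i a = 1 := by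
  simp [PP]

theorem PP_succ (C) (k : ℕ) (i : JP mdim (k + 1)) (a : Fin (rP r (k + 1))) :
    PP mdim r C (k + 1) i a
      = ∑ b : Fin (rP r k),
          PP mdim r C k (Fin.init i) b * C k b (i (Fin.last k)) a := by
  unfold PP
  rw [sum_split_last (fun j : Fin (k + 1) => Fin (rP r j.val))]
  refine Finset.sum_congr rfl fun b _ => ?_
  rw [Finset.sum_mul]
  refine Finset.sum_congr rfl fun β _ => ?_
  rw [Fin.prod_univ_castSucc]
  congr 1
  · refine Finset.prod_congr rfl fun j _ => ?_
    simp [Fin.snoc_castSucc, Fin.succ_castSucc, Fin.init, -Fin.castSucc_succ]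
  · simp [Fin.snoc_last, Fin.succ_last]

theorem hrPj (j : Fin (d + 1)) : rP r j.val = r j := rP_eq r j.isLt

theorem PP_formula (F : (k : Fin d) → Fin (r k.castSucc) → Fin (mdim k) → Fin (r k.succ) → ℝ)
    (i : ∀ j : Fin d, Fin (mdim j)) :
    ∑ a : Fin (rP r d),
        PP mdim r (GP mdim r F) d (fun j => Fin.cast (mP_eq mdim j.isLt).symm (i j)) a
      = ∑ α : (j : Fin (d + 1)) → Fin (r j),
          ∏ j : Fin d, F j (α j.castSucc) (i j) (α j.succ) := by
  calc ∑ a : Fin (rP r d),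
        PP mdim r (GP mdim r F) d (fun j => Fin.cast (mP_eq mdim j.isLt).symm (i j)) a
      = ∑ a : Fin (rP r d), ∑ β : ∀ j : Fin d, Fin (rP r j.val),
          (fun α' : ∀ j : Fin (d + 1), Fin (rP r j.val) =>
            ∏ j : Fin d, GP mdim r F j.val (α' j.castSucc)
              (Fin.cast (mP_eq mdim j.isLt).symm (i j)) (α' j.succ))
          (Fin.snoc (α := fun t : Fin (d + 1) => Fin (rP r t.val)) β a) := by
        refine Finset.sum_congr rfl fun a _ => Finset.sum_congr rfl fun β _ => ?_
        simp only []
        exact Finset.prod_congr rfl fun j _ => by rw [Fin.snoc_castSucc]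
    _ = ∑ α' : ∀ j : Fin (d + 1), Fin (rP r j.val),
          ∏ j : Fin d, GP mdim r F j.val (α' j.castSucc)
            (Fin.cast (mP_eq mdim j.isLt).symm (i j)) (α' j.succ) :=
        (sum_split_last (fun j : Fin (d + 1) => Fin (rP r j.val))
          (fun α' => ∏ j : Fin d, GP mdim r F j.val (α' j.castSucc)
            (Fin.cast (mP_eq mdim j.isLt).symm (i j)) (α' j.succ))).symm
    _ = ∑ α : (j : Fin (d + 1)) → Fin (r j),
          ∏ j : Fin d, F j (α j.castSucc) (i j) (α j.succ) := by
        refine Fintype.sum_equiv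
          (Equiv.piCongrRight (fun j : Fin (d + 1) => finCongr (hrPj r j))) _ _ fun α' => ?_
        refine Finset.prod_congr rfl fun j _ => ?_
        simp only [GP, Equiv.piCongrRight_apply, Pi.map_apply, finCongr_apply]
        rw [dif_pos j.isLt]
        rfl

end Structural

theorem poly_bound (n : ℕ) (x : ℝ) (hx : 0 ≤ x) (h1 : (n : ℝ) * x ≤ 1) :
    (1 + x) ^ n ≤ 1 + (n : ℝ) * x + ((n : ℝ) * x) ^ 2 := by
  induction n with
  | zero => simp
  | succ n ih =>
    have hcast : ((n + 1 : ℕ) : ℝ) = (n : ℝ) + 1 := by push_cast; ring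
    rw [hcast] at h1 ⊢
    have hn1 : (n : ℝ) * x ≤ 1 := by nlinarith [Nat.cast_nonneg (α := ℝ) n]
    have ihn := ih hn1
    have hkey : (n : ℝ) ^ 2 * x ≤ (n : ℝ) + 1 := by
      nlinarith [Nat.cast_nonneg (α := ℝ) n, sq_nonneg ((n : ℝ))]
    calc (1 + x) ^ (n + 1) = (1 + x) ^ n * (1 + x) := by ring
      _ ≤ (1 + (n : ℝ) * x + ((n : ℝ) * x) ^ 2) * (1 + x) := by
          apply mul_le_mul_of_nonneg_right ihn (by linarith)
      _ ≤ 1 + ((n : ℝ) + 1) * x + (((n : ℝ) + 1) * x) ^ 2 := by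
          nlinarith [mul_nonneg hx hx, mul_le_mul_of_nonneg_right hkey (mul_nonneg hx hx),
            Nat.cast_nonneg (α := ℝ) n]


/-- Perturbational bound for tensor trains: if every unfolding matrix
`F_k(i_k; (α_{k−1}, α_k))` has full column rank with smallest singular value at
least `1/c_F`, each component is perturbed by at most `ε` in Frobenius norm,
and `ε ≤ 1/(c_F d)`, then the tensor trains `D` and `D̃` built from the original
and perturbed components satisfy `‖D − D̃‖_F ≤ 2 d c_F ε ‖D‖_F`. -/
theorem tensor_train_perturbation_bound
    (d : ℕ) (hd : 2 ≤ d)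
    (mdim : Fin d → ℕ) (hmdim : ∀ k, 1 ≤ mdim k)
    (r : Fin (d + 1) → ℕ)
    (hr0 : r 0 = 1) (hrlast : r (Fin.last d) = 1) (hrpos : ∀ k, 1 ≤ r k)
    (F Fhat : (k : Fin d) → Fin (r k.castSucc) → Fin (mdim k) → Fin (r k.succ) → ℝ)
    (D Dtil : ((k : Fin d) → Fin (mdim k)) → ℝ)
    (hD : ∀ i, D i =
      ∑ α : (k : Fin (d + 1)) → Fin (r k),
        ∏ k : Fin d, F k (α k.castSucc) (i k) (α k.succ))
    (hDtil : ∀ i, Dtil i =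
      ∑ α : (k : Fin (d + 1)) → Fin (r k),
        ∏ k : Fin d, Fhat k (α k.castSucc) (i k) (α k.succ))
    (cF : ℝ) (hcF : 0 < cF)
    -- each unfolding has at least as many rows as columns
    (hdims : ∀ k : Fin d, r k.castSucc * r k.succ ≤ mdim k)
    -- smallest singular value of each unfolding matrix is at least `1/c_F`
    (hsv : ∀ (k : Fin d) (w : Fin (r k.castSucc) × Fin (r k.succ) → ℝ),
      (1 / cF) * eNorm w ≤
        eNorm (fun i : Fin (mdim k) =>
          ∑ p : Fin (r k.castSucc) × Fin (r k.succ), F k p.1 i p.2 * w p))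
    (ε : ℝ) (hε : 0 < ε)
    -- componentwise Frobenius-norm perturbation bound
    (hpert : ∀ k : Fin d,
      eNorm (fun q : Fin (r k.castSucc) × Fin (mdim k) × Fin (r k.succ) =>
        F k q.1 q.2.1 q.2.2 - Fhat k q.1 q.2.1 q.2.2) ≤ ε)
    (hεsmall : ε ≤ 1 / (cF * d)) :
    eNorm (fun i => D i - Dtil i) ≤ 2 * d * cF * ε * eNorm D := by
  classical
  set x : ℝ := cF * ε with hxdef
  have hx : 0 ≤ x := le_of_lt (mul_pos hcF hε)
  have hdpos : (0:ℝ) < d := by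
    have : (2:ℝ) ≤ (d:ℝ) := by exact_mod_cast hd
    linarith
  have hdx : (d : ℝ) * x ≤ 1 := by
    have hcd : 0 < cF * (d:ℝ) := mul_pos hcF hdpos
    rw [le_div_iff₀ hcd] at hεsmall
    calc (d:ℝ) * x = ε * (cF * d) := by rw [hxdef]; ring
      _ ≤ 1 := hεsmall
  set G := GP mdim r F with hG
  set Ghat := GP mdim r Fhat with hGhat
  set P := PP mdim r G with hP
  set Phat := PP mdim r Ghat with hPhat
  -- bridged singular-value lower bound
  have hsvP : ∀ (k : ℕ) (hk : k < d) (w : Fin (rP r k) × Fin (rP r (k+1)) → ℝ),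
      (1 / cF) * eNorm w ≤ eNorm (fun v : Fin (mP mdim k) =>
        ∑ p : Fin (rP r k) × Fin (rP r (k+1)), G k p.1 v p.2 * w p) := by
    intro k hk w
    set K : Fin d := ⟨k, hk⟩ with hK
    set w0 : Fin (r K.castSucc) × Fin (r K.succ) → ℝ := fun p =>
      w (Fin.cast (rP_eq_castSucc r hk).symm p.1, Fin.cast (rP_eq_succ r hk).symm p.2) with hw0
    have heq1 : eNorm w0 = eNorm w := by
      have h1 := enorm_comp_equiv (Equiv.prodCongr (finCongr (rP_eq_castSucc r hk).symm)
        (finCongr (rP_eq_succ r hk).symm)) w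
      rw [← h1]
      exact enorm_congr (fun p => rfl)
    have heq2 : eNorm (fun v : Fin (mP mdim k) =>
        ∑ p : Fin (rP r k) × Fin (rP r (k+1)), G k p.1 v p.2 * w p)
        = eNorm (fun i : Fin (mdim K) =>
            ∑ p : Fin (r K.castSucc) × Fin (r K.succ), F K p.1 i p.2 * w0 p) := by
      have h2 := enorm_comp_equiv (finCongr (mP_eq mdim hk))
        (fun i : Fin (mdim K) =>
          ∑ p : Fin (r K.castSucc) × Fin (r K.succ), F K p.1 i p.2 * w0 p)
      rw [← h2]
      refine enorm_congr (fun v => ?_)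
      refine Fintype.sum_equiv (Equiv.prodCongr (finCongr (rP_eq_castSucc r hk))
        (finCongr (rP_eq_succ r hk))) _ _ fun p => ?_
      simp only [hG, GP]
      rw [dif_pos hk]
      rfl
    rw [heq2, ← heq1]
    exact hsv K w0
  -- bridged perturbation bound
  have hpertP : ∀ (k : ℕ) (hk : k < d),
      eNorm (fun q : Fin (rP r k) × Fin (mP mdim k) × Fin (rP r (k+1)) =>
        G k q.1 q.2.1 q.2.2 - Ghat k q.1 q.2.1 q.2.2) ≤ ε := by
    intro k hk
    set K : Fin d := ⟨k, hk⟩ with hK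
    have heq : eNorm (fun q : Fin (rP r k) × Fin (mP mdim k) × Fin (rP r (k+1)) =>
        G k q.1 q.2.1 q.2.2 - Ghat k q.1 q.2.1 q.2.2)
        = eNorm (fun q : Fin (r K.castSucc) × Fin (mdim K) × Fin (r K.succ) =>
            F K q.1 q.2.1 q.2.2 - Fhat K q.1 q.2.1 q.2.2) := by
      have h1 := enorm_comp_equiv (Equiv.prodCongr (finCongr (rP_eq_castSucc r hk))
        (Equiv.prodCongr (finCongr (mP_eq mdim hk)) (finCongr (rP_eq_succ r hk))))
        (fun q : Fin (r K.castSucc) × Fin (mdim K) × Fin (r K.succ) =>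
          F K q.1 q.2.1 q.2.2 - Fhat K q.1 q.2.1 q.2.2)
      rw [← h1]
      refine enorm_congr (fun q => ?_)
      simp only [hG, hGhat, GP]
      rw [dif_pos hk, dif_pos hk]
      rfl
    rw [heq]
    exact hpert K
  -- main induction over prefixes
  have Inv : ∀ k, k ≤ d → ∀ w : Fin (rP r k) → ℝ,
      eNorm (fun i : JP mdim k => ∑ a, (Phat k i a - P k i a) * w a)
        ≤ ((1 + x) ^ k - 1) * eNorm (fun i : JP mdim k => ∑ a, P k i a * w a) := by
    intro k
    induction k with
    | zero =>
      intro _ w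
      have hz : ∀ i : JP mdim 0, (∑ a, (Phat 0 i a - P 0 i a) * w a) = 0 := by
        intro i
        apply Finset.sum_eq_zero; intro a _
        rw [hPhat, hP, PP_zero, PP_zero]; ring
      rw [enorm_congr hz, ENormAux.enorm_zero]
      simp
    | succ k ih =>
      intro hk1 w
      have hk : k < d := hk1
      set lam : ℝ := (1 + x) ^ k - 1 with hlamdef
      have hlam : 0 ≤ lam := by
        have : (1:ℝ) ≤ (1 + x) ^ k := one_le_pow₀ (by linarith)
        rw [hlamdef]; linarith
      have step := step_lemma (J := JP mdim k) (fun i a => P k i a) (fun i a => Phat k i a)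
        (G k) (Ghat k) cF ε lam hcF hε.le hlam (hsvP k hk) (hpertP k hk)
        (fun w'' => ih (le_of_lt hk) w'') w
      have eL : eNorm (fun i : JP mdim (k+1) => ∑ a, (Phat (k+1) i a - P (k+1) i a) * w a)
          = eNorm (fun p : JP mdim k × Fin (mP mdim k) =>
              ∑ b, ((∑ a, Phat k p.1 a * Ghat k a p.2 b) - (∑ a, P k p.1 a * G k a p.2 b)) * w b) := by
        rw [← enorm_comp_equiv (ι := JP mdim (k+1)) (piSplitLast (fun j : Fin (k+1) => Fin (mP mdim j.val))).symm
          (fun i : JP mdim (k+1) => ∑ a, (Phat (k+1) i a - P (k+1) i a) * w a)]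
        refine enorm_congr (fun p => ?_)
        refine Finset.sum_congr rfl fun a _ => ?_
        rw [hPhat, hP, PP_succ, PP_succ]
        unfold JP at *; simp [piSplitLast, Fin.init_snoc, Fin.snoc_last]
      have eR : eNorm (fun i : JP mdim (k+1) => ∑ a, P (k+1) i a * w a)
          = eNorm (fun p : JP mdim k × Fin (mP mdim k) =>
              ∑ b, (∑ a, P k p.1 a * G k a p.2 b) * w b) := by
        rw [← enorm_comp_equiv (ι := JP mdim (k+1)) (piSplitLast (fun j : Fin (k+1) => Fin (mP mdim j.val))).symm
          (fun i : JP mdim (k+1) => ∑ a, P (k+1) i a * w a)]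
        refine enorm_congr (fun p => ?_)
        refine Finset.sum_congr rfl fun a _ => ?_
        rw [hP, PP_succ]
        unfold JP at *; simp [piSplitLast, Fin.init_snoc, Fin.snoc_last]
      rw [eL, eR]
      have hco : ((1 + lam) * (1 + cF * ε) - 1) = (1 + x) ^ (k + 1) - 1 := by
        rw [hlamdef, ← hxdef]; ring
      rw [← hco]
      exact step
  -- conclude
  have final := Inv d le_rfl (fun _ => (1:ℝ))
  set ec : ((j : Fin d) → Fin (mdim j)) ≃ JP mdim d :=
    Equiv.piCongrRight (fun j => finCongr (mP_eq mdim j.isLt).symm) with hec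
  have hDeq : ∀ i : (j : Fin d) → Fin (mdim j),
      (∑ a, P d (ec i) a * (1:ℝ)) = D i := by
    intro i
    rw [hD i, ← PP_formula mdim r F i]
    refine Finset.sum_congr rfl fun a _ => ?_
    rw [mul_one, hP, hG]
    rfl
  have hDtileq : ∀ i : (j : Fin d) → Fin (mdim j),
      (∑ a, Phat d (ec i) a * (1:ℝ)) = Dtil i := by
    intro i
    rw [hDtil i, ← PP_formula mdim r Fhat i]
    refine Finset.sum_congr rfl fun a _ => ?_
    rw [mul_one, hPhat, hGhat]
    rfl
  have eL2 : eNorm (fun i : JP mdim d => ∑ a, (Phat d i a - P d i a) * (1:ℝ))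
      = eNorm (fun i => Dtil i - D i) := by
    rw [← enorm_comp_equiv ec (fun i : JP mdim d => ∑ a, (Phat d i a - P d i a) * (1:ℝ))]
    refine enorm_congr (fun i => ?_)
    have : (∑ a, (Phat d (ec i) a - P d (ec i) a) * (1:ℝ))
        = (∑ a, Phat d (ec i) a * (1:ℝ)) - (∑ a, P d (ec i) a * (1:ℝ)) := by
      rw [← Finset.sum_sub_distrib]
      exact Finset.sum_congr rfl fun a _ => by ring
    rw [this, hDeq i, hDtileq i]
  have eR2 : eNorm (fun i : JP mdim d => ∑ a, P d i a * (1:ℝ)) = eNorm D := by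
    rw [← enorm_comp_equiv ec (fun i : JP mdim d => ∑ a, P d i a * (1:ℝ))]
    refine enorm_congr (fun i => ?_)
    exact hDeq i
  rw [eL2, eR2] at final
  have hflip : eNorm (fun i => D i - Dtil i) = eNorm (fun i => Dtil i - D i) := by
    rw [← ENormAux.enorm_neg (fun i => Dtil i - D i)]
    exact enorm_congr (fun i => by ring)
  rw [hflip]
  refine le_trans final ?_
  refine mul_le_mul_of_nonneg_right ?_ (enorm_nonneg D)
  have hp := poly_bound d x hx hdx
  have h2dx : 2 * (d:ℝ) * cF * ε = 2 * ((d:ℝ) * x) := by rw [hxdef]; ring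
  rw [h2dx]
  nlinarith [hp, hdx, mul_nonneg (le_of_lt hdpos) hx]
end
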